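/- arXiv:1703.03891 — 4 statements merged into one kernel-verified Lean document; each statement's English description precedes it below -/
import Mathlib

section
/- Let G be an additive commutative group and h, h' : G → ℝ two functions. Suppose there are constants c3, c4, c5, c6, c7, c8 > 0 such that c3·h'(x) − c4 ≤ h(x) ≤ c5·h'(x) + c6 for all x ∈ G, and h'(x₁ + x₂) ≤ c7·(h'(x₁) + h'(x₂)) + c8 for all x₁, x₂ ∈ G. Then for every ε > 0 there exist ε' > 0 and c9 ∈ ℝ, depending only on c3, …, c8 and ε, such that for every subset Σ ⊆ G one has the inclusion C(Σ, h', ε') ⊆ {x ∈ G : h'(x) < c9} ∪ C(Σ, h, ε). -/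
/-!
Write `x = a + b` with `h' b ≤ ε' (1 + h' a)`. If `h' a` is large, the comparison
`h ≍ h'` turns this into `h b ≤ ε (1 + h a)` once `c5 ε' = ε c3 / 2`: the linear growth
of `ε (1 + h a)` in `h' a` then absorbs the additive constants. If `h' a` is bounded,
so is `h' b`, and the quasi-additivity of `h'` bounds `h' x`.
-/

/-- The height cone `C(Σ, h, ε)` associated with a subset `Σ` of an additive
commutative group `G`, a function `h : G → ℝ`, and a real number `ε`. -/
def heightCone {G : Type*} [AddCommGroup G] (S : Set G) (h : G → ℝ) (ε : ℝ) : Set G :=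
  {x : G | ∃ a ∈ S, ∃ b : G, x = a + b ∧ h b ≤ ε * (1 + h a)}

section

variable {G : Type*} {h h' : G → ℝ}

theorem heightCone_subset_union_of_forall [AddCommGroup G] {S : Set G} {ε ε' c9 : ℝ}
    (H : ∀ a b, h' b ≤ ε' * (1 + h' a) → h' (a + b) < c9 ∨ h b ≤ ε * (1 + h a)) :
    heightCone S h' ε' ⊆ {x | h' x < c9} ∪ heightCone S h ε := by
  rintro x ⟨a, haS, b, rfl, hb⟩
  exact (H a b hb).imp id fun hab => ⟨a, haS, b, rfl, hab⟩

theorem cone_bound_of_threshold_le {a b : G} {c3 c4 c5 c6 ε : ℝ}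
    (hc3 : 0 < c3) (hc5 : 0 < c5) (hε : 0 < ε)
    (hlow : c3 * h' a - c4 ≤ h a) (hup : h b ≤ c5 * h' b + c6)
    (hb : h' b ≤ ε * c3 / (2 * c5) * (1 + h' a))
    (ha : 1 + 2 * (c6 + ε * c4) / (ε * c3) ≤ h' a) :
    h b ≤ ε * (1 + h a) := by
  have hεc3 : 0 < ε * c3 := by positivity
  have habsorb : c6 + ε * c4 ≤ ε * c3 / 2 * (h' a - 1) := by
    rw [← le_sub_iff_add_le', div_le_iff₀ hεc3] at ha
    linarith
  calc h b ≤ c5 * h' b + c6 := hup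
    _ ≤ c5 * (ε * c3 / (2 * c5) * (1 + h' a)) + c6 := by gcongr
    _ = ε * c3 / 2 * (1 + h' a) + c6 := by field_simp
    _ ≤ ε * (1 + (c3 * h' a - c4)) := by nlinarith
    _ ≤ ε * (1 + h a) := by gcongr

theorem le_of_cone_bound_of_le [Add G] {a b : G} {c7 c8 ε' T : ℝ} (hc7 : 0 ≤ c7) (hε' : 0 ≤ ε')
    (hadd : h' (a + b) ≤ c7 * (h' a + h' b) + c8)
    (hb : h' b ≤ ε' * (1 + h' a)) (ha : h' a ≤ T) :
    h' (a + b) ≤ c7 * (T + ε' * (1 + T)) + c8 := by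
  have hb' : h' b ≤ ε' * (1 + T) := hb.trans (by gcongr)
  calc h' (a + b) ≤ c7 * (h' a + h' b) + c8 := hadd
    _ ≤ c7 * (T + ε' * (1 + T)) + c8 := by gcongr

end

theorem heightCone_comparison_general {G : Type*} [AddCommGroup G] (h h' : G → ℝ)
    (c3 c4 c5 c6 c7 c8 : ℝ)
    (hc3 : 0 < c3) (hc5 : 0 < c5)
    (hc7 : 0 < c7)
    (hlow : ∀ x : G, c3 * h' x - c4 ≤ h x)
    (hup : ∀ x : G, h x ≤ c5 * h' x + c6)
    (hadd : ∀ x₁ x₂ : G, h' (x₁ + x₂) ≤ c7 * (h' x₁ + h' x₂) + c8)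
    (ε : ℝ) (hε : 0 < ε) :
    ∃ ε' > 0, ∃ c9 : ℝ, ∀ S : Set G,
      heightCone S h' ε' ⊆ {x : G | h' x < c9} ∪ heightCone S h ε := by
  set ε' := ε * c3 / (2 * c5)
  set T := 1 + 2 * (c6 + ε * c4) / (ε * c3)
  have hε' : 0 < ε' := by positivity
  refine ⟨ε', hε', c7 * (T + ε' * (1 + T)) + c8 + 1, fun S =>
    heightCone_subset_union_of_forall fun a b hb => ?_⟩
  rcases le_or_gt T (h' a) with ha | ha
  · exact Or.inr (cone_bound_of_threshold_le hc3 hc5 hε (hlow a) (hup b) hb ha)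
  · exact Or.inl ((le_of_cone_bound_of_le hc7.le hε'.le (hadd a b) hb ha.le).trans_lt
      (lt_add_one _))

theorem heightCone_comparison {G : Type*} [AddCommGroup G] (h h' : G → ℝ)
    (c3 c4 c5 c6 c7 c8 : ℝ)
    (hc3 : 0 < c3) (hc4 : 0 < c4) (hc5 : 0 < c5) (hc6 : 0 < c6)
    (hc7 : 0 < c7) (hc8 : 0 < c8)
    (hlow : ∀ x : G, c3 * h' x - c4 ≤ h x)
    (hup : ∀ x : G, h x ≤ c5 * h' x + c6)
    (hadd : ∀ x₁ x₂ : G, h' (x₁ + x₂) ≤ c7 * (h' x₁ + h' x₂) + c8)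
    (ε : ℝ) (hε : 0 < ε) :
    ∃ ε' > 0, ∃ c9 : ℝ, ∀ S : Set G,
      heightCone S h' ε' ⊆ {x : G | h' x < c9} ∪ heightCone S h ε :=
  heightCone_comparison_general h h' c3 c4 c5 c6 c7 c8 hc3 hc5 hc7 hlow hup hadd ε hε
end

section
/- Let K be a field, t, r, r' ∈ ℕ, and y : Fin t → (Fin r → K) a family of column vectors. Then: (i) there exist finitely many pairs (g₁, E₁), …, (g_N, E_N), where each g_k is a polynomial over K in variables indexed by Fin t ⊕ (Fin r × Fin r') and each E_k is a finite set of such polynomials, so that for all a : Fin t → K and all matrices M : Matrix (Fin r) (Fin r') K, the linear system ∑_{i} a_i • y_i = M·x has a solution x ∈ K^{r'} if and only if for some k the polynomial g_k does not vanish and every polynomial of E_k vanishes at the point whose coordinate at inl i is a_i and at inr (p,q) is the matrix entry M p q; and (ii) if the system ∑_i a_i • y_i = M·x has a solution, then for every c ∈ K the scaled system ∑_i (c·a_i) • y_i = (c•M)·x also has a solution. -/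
/-!
Choose columns `h` of `M` forming a basis of its column space; since row rank equals column rank,
some rows `f` make `B = M.submatrix f h` nonsingular. Then `b` is in the column space iff
`b = M.submatrix id h *ᵥ B⁻¹ *ᵥ (b ∘ f)`. Writing `B⁻¹ = (det B)⁻¹ • adj B` turns this into
`det B ≠ 0` together with the polynomial equations
`det B • b = M.submatrix id h *ᵥ adj B *ᵥ (b ∘ f)` in the entries of `M` and the coefficients `a`
of `b = ∑ aᵢ • yᵢ`, and there are only finitely many choices of `(f, h)`. The cone property holds
because the same solution `x` solves the scaled system.
-/

open Matrix MvPolynomial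

theorem exists_linearIndependent_comp_fin_embedding {K V ι : Type*} [Field K] [AddCommGroup V]
    [Module K V] [Finite ι] (v : ι → V) :
    ∃ (s : ℕ) (e : Fin s ↪ ι), LinearIndependent K (v ∘ e) ∧
      Submodule.span K (Set.range (v ∘ e)) = Submodule.span K (Set.range v) := by
  obtain ⟨κ, a, ha, hspan, hli⟩ := exists_linearIndependent' K v
  have : Finite κ := Finite.of_injective a ha
  let eκ := (Finite.equivFin κ).symm
  refine ⟨_, eκ.toEmbedding.trans ⟨a, ha⟩, hli.comp eκ eκ.injective, ?_⟩
  rw [← hspan]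
  exact congrArg _ (EquivLike.range_comp (v ∘ a) eκ)

theorem exists_fin_embedding_iff_exists_fin_card_succ {m : Type*} [Fintype m]
    {P : (s : ℕ) → (Fin s ↪ m) → Prop} :
    (∃ s, ∃ f : Fin s ↪ m, P s f) ↔ ∃ s : Fin (Fintype.card m + 1), ∃ f : Fin s ↪ m, P s f :=
  ⟨fun ⟨s, f, hf⟩ => ⟨⟨s, Nat.lt_succ_of_le (by simpa using Fintype.card_le_of_embedding f)⟩,
    f, hf⟩, fun ⟨s, f, hf⟩ => ⟨s, f, hf⟩⟩

namespace Matrix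

variable {K R S m n κ : Type*}

section CramerDefect

variable [Fintype κ] [DecidableEq κ]

def cramerDefect [CommRing R] (M : Matrix m n R) (b : m → R) (f : κ → m) (h : κ → n) : m → R :=
  (M.submatrix f h).det • b - M.submatrix id h *ᵥ ((M.submatrix f h).adjugate *ᵥ (b ∘ f))

theorem _root_.RingHom.comp_cramerDefect [CommRing R] [CommRing S] (φ : R →+* S)
    (M : Matrix m n R) (b : m → R) (f : κ → m) (h : κ → n) :
    φ ∘ cramerDefect M b f h = cramerDefect (M.map φ) (φ ∘ b) f h := by
  have hadj : φ ∘ ((M.submatrix f h).adjugate *ᵥ (b ∘ f)) =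
      ((M.submatrix f h).map φ).adjugate *ᵥ (φ ∘ b ∘ f) := by
    rw [← RingHom.mapMatrix_apply, ← RingHom.map_adjugate]
    exact funext (φ.map_mulVec _ _)
  ext p
  simp only [cramerDefect, Function.comp_apply, Pi.sub_apply, Pi.smul_apply, smul_eq_mul,
    map_sub, map_mul, RingHom.map_det, RingHom.map_mulVec, hadj]
  rfl

theorem cramerDefect_eq_zero_iff [Field K] (M : Matrix m n K) (b : m → K) {f : κ → m}
    {h : κ → n} (hdet : (M.submatrix f h).det ≠ 0) :
    cramerDefect M b f h = 0 ↔ b = M.submatrix id h *ᵥ ((M.submatrix f h)⁻¹ *ᵥ (b ∘ f)) := by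
  rw [cramerDefect, sub_eq_zero, inv_def, Ring.inverse_eq_inv', smul_mulVec, mulVec_smul,
    eq_inv_smul_iff₀ hdet]

end CramerDefect

variable [Field K]

theorem exists_det_submatrix_ne_zero_of_linearIndependent_col [Fintype m] {s : ℕ}
    {A : Matrix m (Fin s) K} (hA : LinearIndependent K A.col) :
    ∃ f : Fin s ↪ m, (A.submatrix f id).det ≠ 0 := by
  obtain ⟨s', f, hf, hspan⟩ := exists_linearIndependent_comp_fin_embedding (K := K) A.row
  have hs : s' = s := by
    have hrow := A.rank_eq_finrank_span_row
    have hcol := A.rank_eq_finrank_span_cols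
    rw [← hspan, finrank_span_eq_card hf] at hrow
    rw [finrank_span_eq_card hA] at hcol
    simpa using hrow.symm.trans hcol
  subst hs
  exact ⟨f, ((isUnit_iff_isUnit_det _).mp (linearIndependent_rows_iff_isUnit.mp hf)).ne_zero⟩

theorem range_mulVecLin_submatrix_id_le [Fintype n] [Fintype κ] (M : Matrix m n K) (h : κ → n) :
    LinearMap.range (M.submatrix id h).mulVecLin ≤ LinearMap.range M.mulVecLin := by
  rw [range_mulVecLin, range_mulVecLin]
  exact Submodule.span_mono (Set.range_comp_subset_range h M.col)

theorem exists_det_submatrix_ne_zero_and_range_eq [Fintype m] [Fintype n] (M : Matrix m n K) :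
    ∃ (s : ℕ) (f : Fin s ↪ m) (h : Fin s ↪ n), (M.submatrix f h).det ≠ 0 ∧
      LinearMap.range (M.submatrix id h).mulVecLin = LinearMap.range M.mulVecLin := by
  obtain ⟨s, h, hh, hspan⟩ := exists_linearIndependent_comp_fin_embedding (K := K) M.col
  obtain ⟨f, hf⟩ := exists_det_submatrix_ne_zero_of_linearIndependent_col (A := M.submatrix id h) hh
  refine ⟨s, f, h, hf, ?_⟩
  rw [range_mulVecLin, range_mulVecLin]
  exact hspan

theorem exists_mulVec_eq_iff_exists_cramerDefect_eq_zero [Fintype m] [Fintype n]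
    (M : Matrix m n K) (b : m → K) :
    (∃ x, M *ᵥ x = b) ↔ ∃ (s : ℕ) (f : Fin s ↪ m) (h : Fin s ↪ n),
      (M.submatrix f h).det ≠ 0 ∧ cramerDefect M b f h = 0 := by
  constructor
  · rintro ⟨x, hx⟩
    obtain ⟨s, f, h, hdet, hrange⟩ := exists_det_submatrix_ne_zero_and_range_eq M
    obtain ⟨x', hx'⟩ : b ∈ LinearMap.range (M.submatrix id h).mulVecLin := hrange ▸ ⟨x, hx⟩
    refine ⟨s, f, h, hdet, (cramerDefect_eq_zero_iff M b hdet).2 ?_⟩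
    have hBx' : M.submatrix f h *ᵥ x' = b ∘ f := by rw [← hx']; rfl
    have hinv : (M.submatrix f h)⁻¹ *ᵥ (b ∘ f) = x' := by
      rw [← hBx', mulVec_mulVec, nonsing_inv_mul _ (isUnit_iff_ne_zero.2 hdet), one_mulVec]
    rw [hinv]
    exact hx'.symm
  · rintro ⟨s, f, h, hdet, hdefect⟩
    rw [cramerDefect_eq_zero_iff M b hdet] at hdefect
    exact range_mulVecLin_submatrix_id_le M h ⟨_, hdefect.symm⟩

end Matrix

namespace MvPolynomial

variable (ι m n K : Type*) [CommSemiring K]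

noncomputable def genericMatrix : Matrix m n (MvPolynomial (ι ⊕ m × n) K) :=
  Matrix.of fun p q => X (Sum.inr (p, q))

variable {ι m n K}

noncomputable def genericLinearCombination [Fintype ι] (y : ι → m → K) :
    m → MvPolynomial (ι ⊕ m × n) K :=
  fun p => ∑ i, C (y i p) * X (Sum.inl i)

@[simp]
theorem genericMatrix_map_eval (a : ι → K) (M : Matrix m n K) :
    (genericMatrix ι m n K).map (eval (Sum.elim a fun pq => M pq.1 pq.2)) = M := by
  ext p q
  simp [genericMatrix]

@[simp]
theorem eval_comp_genericLinearCombination [Fintype ι] (y : ι → m → K) (a : ι → K)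
    (M : Matrix m n K) :
    eval (Sum.elim a fun pq => M pq.1 pq.2) ∘ genericLinearCombination (n := n) y =
      ∑ i, a i • y i := by
  ext p
  simp [genericLinearCombination, Finset.sum_apply, mul_comm]

variable {K κ : Type*} [CommRing K] [Fintype κ] [DecidableEq κ]

theorem eval_det_submatrix_genericMatrix (a : ι → K) (M : Matrix m n K) (f : κ → m)
    (h : κ → n) :
    eval (Sum.elim a fun pq => M pq.1 pq.2) ((genericMatrix ι m n K).submatrix f h).det =
      (M.submatrix f h).det := by
  rw [RingHom.map_det, RingHom.mapMatrix_apply, ← submatrix_map, genericMatrix_map_eval]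

theorem eval_comp_cramerDefect_genericMatrix [Fintype ι] (y : ι → m → K) (a : ι → K)
    (M : Matrix m n K) (f : κ → m) (h : κ → n) :
    eval (Sum.elim a fun pq => M pq.1 pq.2) ∘
        (genericMatrix ι m n K).cramerDefect (genericLinearCombination y) f h =
      M.cramerDefect (∑ i, a i • y i) f h := by
  rw [RingHom.comp_cramerDefect, genericMatrix_map_eval, eval_comp_genericLinearCombination]

end MvPolynomial

theorem solvability_locus_is_cone {K : Type*} [Field K] {t r r' : ℕ}
    (y : Fin t → Fin r → K) :
    (∃ N : ℕ, ∃ g : Fin N → MvPolynomial (Fin t ⊕ Fin r × Fin r') K,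
      ∃ E : Fin N → Finset (MvPolynomial (Fin t ⊕ Fin r × Fin r') K),
      ∀ (a : Fin t → K) (M : Matrix (Fin r) (Fin r') K),
        (∃ x : Fin r' → K, M.mulVec x = ∑ i, a i • y i) ↔
          ∃ k : Fin N,
            MvPolynomial.eval (Sum.elim a (fun pq => M pq.1 pq.2)) (g k) ≠ 0 ∧
            ∀ e ∈ E k, MvPolynomial.eval (Sum.elim a (fun pq => M pq.1 pq.2)) e = 0) ∧
    (∀ (a : Fin t → K) (M : Matrix (Fin r) (Fin r') K) (c : K),
      (∃ x : Fin r' → K, M.mulVec x = ∑ i, a i • y i) →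
      (∃ x : Fin r' → K, (c • M).mulVec x = ∑ i, (c * a i) • y i)) := by
  classical
  let D := Σ s : Fin (Fintype.card (Fin r) + 1), (Fin s ↪ Fin r) × (Fin s ↪ Fin r')
  let g (d : D) := ((genericMatrix (Fin t) (Fin r) (Fin r') K).submatrix d.2.1 d.2.2).det
  let E (d : D) := Finset.univ.image ((genericMatrix (Fin t) (Fin r) (Fin r') K).cramerDefect
    (genericLinearCombination y) d.2.1 d.2.2)
  refine ⟨?_, fun a M c ⟨x, hx⟩ => ⟨x, ?_⟩⟩
  · suffices ∀ (a : Fin t → K) (M : Matrix (Fin r) (Fin r') K),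
        (∃ x, M *ᵥ x = ∑ i, a i • y i) ↔ ∃ d : D,
          eval (Sum.elim a fun pq => M pq.1 pq.2) (g d) ≠ 0 ∧
            ∀ e ∈ E d, eval (Sum.elim a fun pq => M pq.1 pq.2) e = 0 by
      let e := (Fintype.equivFin D).symm
      exact ⟨_, g ∘ e, E ∘ e, fun a M => (this a M).trans e.exists_congr_right.symm⟩
    intro a M
    rw [exists_mulVec_eq_iff_exists_cramerDefect_eq_zero,
      exists_fin_embedding_iff_exists_fin_card_succ]
    simp only [D, g, E, Sigma.exists, Prod.exists, Finset.forall_mem_image, Finset.mem_univ,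
      true_implies, eval_det_submatrix_genericMatrix, ← eval_comp_cramerDefect_genericMatrix,
      funext_iff, Function.comp_apply, Pi.zero_apply]
  · simp only [Matrix.smul_mulVec, hx, Finset.smul_sum, smul_smul]
end

section
/- Let U ⊆ ℂ be an open set, m ∈ ℕ, and for each u ∈ Fin m let κ_u : ℂ → ℂ be a function that is complex-differentiable on U with κ_u(z) ≠ 0 for every z ∈ U; let a : Fin m → ℝ. Define f(z) = ∏_{u} ‖κ_u(z)‖^{a_u} (real powers of the norms). Then for every z ∈ U, the Laplacian of the function w ↦ log(1 + f(w)) at z equals (f(z) / (1 + f(z))²) · ‖∑_{u} a_u · (κ_u'(z) / κ_u(z))‖², where κ_u' denotes the complex derivative of κ_u. -/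
/-!
Near `z` each `κ u` has a holomorphic logarithm, so `∏ u, ‖κ u‖ ^ a u = exp (re G)` with
`G = ∑ u, a u * log (κ u)` holomorphic and `G' = ∑ u, a u * κ u' / κ u`. For any `C²` function
`φ`, the chain rule gives `Δ (φ ∘ re G) = φ'' (re G) * ‖G'‖² + φ' (re G) * Δ (re G)`, and the last
term vanishes because `re G` is harmonic. For `φ t = log (1 + exp t)` one has
`φ'' t = exp t / (1 + exp t) ^ 2`.
-/

/-- The (real) Laplacian of a function `g : ℂ → ℝ` at a point: the sum of its second
derivatives in the two real coordinate directions `1` and `I` of `ℂ ≅ ℝ²`. -/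
noncomputable def laplacian (g : ℂ → ℝ) (z : ℂ) : ℝ :=
  fderiv ℝ (fun w => fderiv ℝ g w 1) z 1 +
    fderiv ℝ (fun w => fderiv ℝ g w Complex.I) z Complex.I

open Filter Topology

theorem Filter.EventuallyEq.laplacian_eq {g₁ g₂ : ℂ → ℝ} {z : ℂ} (h : g₁ =ᶠ[𝓝 z] g₂) :
    laplacian g₁ z = laplacian g₂ z := by
  have hd : ∀ v, (fun w => fderiv ℝ g₁ w v) =ᶠ[𝓝 z] fun w => fderiv ℝ g₂ w v := fun v => by
    filter_upwards [h.eventuallyEq_nhds] with w hw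
    rw [hw.fderiv_eq]
  rw [laplacian, laplacian, (hd 1).fderiv_eq, (hd Complex.I).fderiv_eq]

theorem HasDerivAt.hasFDerivAt_re {H : ℂ → ℂ} {H' w : ℂ} (hH : HasDerivAt H H' w) :
    HasFDerivAt (fun w => (H w).re) (Complex.reCLM.comp (ContinuousLinearMap.mul ℝ ℂ H')) w := by
  refine Complex.reCLM.hasFDerivAt.comp w ((hH.hasFDerivAt.restrictScalars ℝ).congr_fderiv ?_)
  ext v
  simp [mul_comm]

theorem laplacian_comp_re {φ φ' : ℝ → ℝ} {φ'' : ℝ} {G : ℂ → ℂ} {z : ℂ}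
    (hφ : ∀ t, HasDerivAt φ (φ' t) t) (hφ' : HasDerivAt φ' φ'' (G z).re)
    (hG : ∀ᶠ w in 𝓝 z, DifferentiableAt ℂ G w) :
    laplacian (fun w => φ (G w).re) z = φ'' * ‖deriv G z‖ ^ 2 := by
  have hfirst : ∀ v, (fun w => fderiv ℝ (fun w => φ (G w).re) w v) =ᶠ[𝓝 z]
      fun w => φ' (G w).re * (deriv G w * v).re := fun v => by
    filter_upwards [hG] with w hw
    have hd : HasFDerivAt (fun w => φ (G w).re) _ w :=
      (hφ _).comp_hasFDerivAt w hw.hasDerivAt.hasFDerivAt_re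
    rw [hd.fderiv]
    simp
  have hG' : HasDerivAt (deriv G) (deriv (deriv G) z) z :=
    (Complex.analyticAt_iff_eventually_differentiableAt.2 hG).deriv.differentiableAt.hasDerivAt
  have hsecond (v : ℂ) : HasFDerivAt (fun w => φ' (G w).re * (deriv G w * v).re) _ z :=
    (hφ'.comp_hasFDerivAt z hG.self_of_nhds.hasDerivAt.hasFDerivAt_re).mul
      (hG'.mul_const v).hasFDerivAt_re
  rw [laplacian, (hfirst 1).fderiv_eq, (hfirst Complex.I).fderiv_eq, (hsecond 1).fderiv,
    (hsecond Complex.I).fderiv]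
  simp only [mul_one, add_apply, smul_apply,
    ContinuousLinearMap.comp_apply, ContinuousLinearMap.mul_apply', Complex.reCLM_apply,
    Function.comp_apply, smul_eq_mul, Complex.mul_re, Complex.mul_im, Complex.I_re,
    Complex.I_im, Complex.sq_norm, Complex.normSq_apply]
  ring

theorem exists_local_log {κ : ℂ → ℂ} {z : ℂ} (hκ : ∀ᶠ w in 𝓝 z, DifferentiableAt ℂ κ w)
    (hz : κ z ≠ 0) :
    ∃ L : ℂ → ℂ, (∀ᶠ w in 𝓝 z, DifferentiableAt ℂ L w ∧ Complex.exp (L w) = κ w) ∧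
      HasDerivAt L (deriv κ z / κ z) z := by
  have hslit : ∀ᶠ w in 𝓝 z, κ w / κ z ∈ Complex.slitPlane :=
    (hκ.self_of_nhds.continuousAt.div_const _).eventually_mem
      (Complex.isOpen_slitPlane.mem_nhds (by simp [hz, Complex.one_mem_slitPlane]))
  refine ⟨fun w => Complex.log (κ w / κ z) + Complex.log (κ z), ?_, ?_⟩
  · filter_upwards [hκ, hslit] with w hw hws
    refine ⟨((hw.div_const _).clog hws).add_const _, ?_⟩
    rw [Complex.exp_add, Complex.exp_log (Complex.slitPlane_ne_zero hws),
      Complex.exp_log hz, div_mul_cancel₀ _ hz]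
  · simpa [hz] using ((hκ.self_of_nhds.hasDerivAt.div_const (κ z)).clog
      hslit.self_of_nhds).add_const (Complex.log (κ z))

theorem exists_local_exp_re_eq_prod_norm_rpow {ι : Type*} [Fintype ι] {κ : ι → ℂ → ℂ} {z : ℂ}
    (hκ : ∀ u, ∀ᶠ w in 𝓝 z, DifferentiableAt ℂ (κ u) w) (hz : ∀ u, κ u z ≠ 0) (a : ι → ℝ) :
    ∃ G : ℂ → ℂ,
      (∀ᶠ w in 𝓝 z, DifferentiableAt ℂ G w ∧ Real.exp (G w).re = ∏ u, ‖κ u w‖ ^ a u) ∧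
      HasDerivAt G (∑ u, (a u : ℂ) * (deriv (κ u) z / κ u z)) z := by
  choose L hL hLz using fun u => exists_local_log (hκ u) (hz u)
  refine ⟨fun w => ∑ u, (a u : ℂ) * L u w, ?_, HasDerivAt.fun_sum fun u _ => (hLz u).const_mul _⟩
  filter_upwards [eventually_all.2 hL] with w hw
  refine ⟨DifferentiableAt.fun_sum fun u _ => (hw u).1.const_mul _, ?_⟩
  simp only [Complex.re_sum, Complex.re_ofReal_mul, Real.exp_sum]
  refine Finset.prod_congr rfl fun u _ => ?_
  rw [mul_comm, Real.exp_mul, ← Complex.norm_exp, (hw u).2]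

theorem hasDerivAt_log_one_add_exp (t : ℝ) :
    HasDerivAt (fun t => Real.log (1 + Real.exp t)) (Real.exp t / (1 + Real.exp t)) t := by
  simpa using ((Real.hasDerivAt_exp t).const_add 1).log (by positivity)

theorem hasDerivAt_exp_div_one_add_exp (t : ℝ) :
    HasDerivAt (fun t => Real.exp t / (1 + Real.exp t))
      (Real.exp t / (1 + Real.exp t) ^ 2) t := by
  refine ((Real.hasDerivAt_exp t).div ((Real.hasDerivAt_exp t).const_add 1)
    (by positivity)).congr_deriv ?_
  ring

theorem laplacian_log_one_add_prod_norm_rpow {U : Set ℂ} (hU : IsOpen U) {m : ℕ}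
    (κ : Fin m → ℂ → ℂ) (hκ : ∀ u, DifferentiableOn ℂ (κ u) U)
    (hκ0 : ∀ u, ∀ z ∈ U, κ u z ≠ 0) (a : Fin m → ℝ) :
    ∀ z ∈ U,
      laplacian (fun w => Real.log (1 + ∏ u, ‖κ u w‖ ^ a u)) z =
        (∏ u, ‖κ u z‖ ^ a u) / (1 + ∏ u, ‖κ u z‖ ^ a u) ^ 2 *
          ‖∑ u, (a u : ℂ) * (deriv (κ u) z / κ u z)‖ ^ 2 := by
  intro z hz
  have hκz (u : Fin m) : ∀ᶠ w in 𝓝 z, DifferentiableAt ℂ (κ u) w := by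
    filter_upwards [hU.mem_nhds hz] with w hw using (hκ u).differentiableAt (hU.mem_nhds hw)
  obtain ⟨G, hG, hGz⟩ := exists_local_exp_re_eq_prod_norm_rpow hκz (fun u => hκ0 u z hz) a
  have hlog : (fun w => Real.log (1 + ∏ u, ‖κ u w‖ ^ a u)) =ᶠ[𝓝 z]
      fun w => Real.log (1 + Real.exp (G w).re) := by
    filter_upwards [hG] with w hw
    rw [hw.2]
  rw [hlog.laplacian_eq, laplacian_comp_re hasDerivAt_log_one_add_exp
    (hasDerivAt_exp_div_one_add_exp _) (hG.mono fun _ hw => hw.1), hGz.deriv,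
    hG.self_of_nhds.2]
end

section
/- Let R be a commutative ring, let t, t', s be natural numbers with s ≤ t and t − s ≤ t', and let a : Fin t → Fin t' → R. In the multivariate polynomial ring over R with variables X_u (u ∈ Fin t) and Y_v (v ∈ Fin t'), consider the polynomial P = (∑_{u} X_u)^s · (∑_{v} Y_v)^{t−s} · ∏_{v ∈ Fin t'} (∑_{u} a_{u v}·X_u + Y_v). Then the coefficient in P of the squarefree top monomial ∏_{u ∈ Fin t} X_u · ∏_{v ∈ Fin t'} Y_v equals s!·(t−s)! · ∑_{S} ∑_{φ} ∏_{v ∈ S} a_{φ(v) v}, where S runs over all subsets of Fin t' of cardinality t − s and φ runs over all injective functions from S to Fin t. -/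
/-!
Expanding `∏ v, (ℓ_v + Y_v)` over the set `S` of indices where `ℓ_v = ∑ u, a u v • X u` is
chosen, each term is a product of an `X`-part `(∑ X)^s * ∏ v ∈ S, ℓ_v` and a `Y`-part
`(∑ Y)^(t - s) * ∏ v ∉ S, Y_v` in disjoint variables, so its top squarefree coefficient factors.
The `Y`-part contributes `(t - s)!` exactly when `#S = t - s`. In the `X`-part, a choice
`φ v` of variable from each `ℓ_v` survives only if `φ` is injective, and then `(∑ X)^s` supplies
the `s` remaining variables in `s!` orders.
-/

open MvPolynomial Finset

section

variable {σ R : Type*} [CommRing R]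

lemma coeff_sumElim_rename_mul {τ : Type*} (p : MvPolynomial σ R) (q : MvPolynomial τ R)
    (d₁ : σ →₀ ℕ) (d₂ : τ →₀ ℕ) :
    coeff (d₁.sumElim d₂) (rename Sum.inl p * rename Sum.inr q) = coeff d₁ p * coeff d₂ q := by
  classical
  induction p using MvPolynomial.induction_on' with
  | monomial a c =>
    induction q using MvPolynomial.induction_on' with
    | monomial b e =>
      rw [rename_monomial, rename_monomial, monomial_mul, ← Finsupp.sumElim_eq_add,
        coeff_monomial, coeff_monomial, coeff_monomial]
      have hinj : a.sumElim b = d₁.sumElim d₂ ↔ a = d₁ ∧ b = d₂ := by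
        simp [Finsupp.ext_iff, Sum.forall]
      simp only [hinj]
      by_cases ha : a = d₁ <;> by_cases hb : b = d₂ <;> simp [ha, hb]
    | add q₁ q₂ h₁ h₂ => rw [map_add, mul_add, coeff_add, h₁, h₂, coeff_add, mul_add]
  | add p₁ p₂ h₁ h₂ => rw [map_add, add_mul, coeff_add, h₁, h₂, coeff_add, add_mul]

noncomputable def squarefreeExponent (T : Finset σ) : σ →₀ ℕ := ∑ j ∈ T, Finsupp.single j 1

variable [DecidableEq σ]

lemma squarefreeExponent_apply (T : Finset σ) (j : σ) :
    squarefreeExponent T j = if j ∈ T then 1 else 0 := by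
  simp [squarefreeExponent, Finsupp.finsetSum_apply, Finsupp.single_apply]

lemma support_squarefreeExponent (T : Finset σ) : (squarefreeExponent T).support = T := by
  ext j; simp [squarefreeExponent_apply]

lemma squarefreeExponent_sub_single {T : Finset σ} {j : σ} (hj : j ∈ T) :
    squarefreeExponent T - Finsupp.single j 1 = squarefreeExponent (T.erase j) := by
  ext i
  by_cases h : i = j <;> simp [squarefreeExponent_apply, h, hj]

lemma multinomial_squarefreeExponent (T : Finset σ) :
    (squarefreeExponent T).multinomial = (#T).factorial := by
  have hT : ∀ i ∈ T, squarefreeExponent T i = 1 := fun i hi ↦ by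
    rw [squarefreeExponent_apply, if_pos hi]
  have := Nat.multinomial_spec T (squarefreeExponent T)
  rw [prod_congr rfl fun i hi ↦ by rw [hT i hi], sum_congr rfl hT] at this
  simpa [Finsupp.multinomial_eq, support_squarefreeExponent] using this

lemma sum_squarefreeExponent (T : Finset σ) : (squarefreeExponent T).sum (fun _ m ↦ m) = #T := by
  simp +contextual [Finsupp.sum, support_squarefreeExponent, squarefreeExponent_apply]

lemma coeff_squarefreeExponent_mul_X (T : Finset σ) (p : MvPolynomial σ R) (j : σ) :
    coeff (squarefreeExponent T) (p * X j) =
      if j ∈ T then coeff (squarefreeExponent (T.erase j)) p else 0 := by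
  rw [coeff_mul_X', support_squarefreeExponent]
  split_ifs with hj
  · rw [squarefreeExponent_sub_single hj]
  · rfl

lemma coeff_squarefreeExponent_mul_prod_X {ι : Type*} [DecidableEq ι] (T : Finset σ)
    (p : MvPolynomial σ R) (I : Finset ι) (g : ι → σ) :
    coeff (squarefreeExponent T) (p * ∏ i ∈ I, X (g i)) =
      if Set.InjOn g I ∧ I.image g ⊆ T then coeff (squarefreeExponent (T \ I.image g)) p
      else 0 := by
  induction I using Finset.induction_on generalizing p with
  | empty => simp
  | insert i I hi ih =>
    rw [prod_insert hi, ← mul_assoc, ih, coeff_squarefreeExponent_mul_X]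
    simp only [coe_insert, Set.injOn_insert (mod_cast hi), image_insert, insert_subset_iff,
      sdiff_insert, mem_sdiff, ← coe_image, mem_coe]
    split_ifs <;> tauto

lemma coeff_squarefreeExponent_sum_X_pow [Fintype σ] (T : Finset σ) (k : ℕ) :
    coeff (squarefreeExponent T) ((∑ j, X j : MvPolynomial σ R) ^ k) =
      if #T = k then (k.factorial : R) else 0 := by
  rw [coeff_sum_X_pow_of_fintype, sum_squarefreeExponent, multinomial_squarefreeExponent]
  split_ifs with h <;> simp [h]

lemma coeff_squarefreeExponent_univ_sum_X_pow_mul_prod [Fintype σ] {ι : Type*} [Fintype ι]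
    (b : ι → σ → R) {k : ℕ} (hk : Fintype.card ι + k = Fintype.card σ) :
    coeff (squarefreeExponent univ)
        ((∑ j, X j : MvPolynomial σ R) ^ k * ∏ i, ∑ j, C (b i j) * X j) =
      k.factorial * ∑ φ : ι ↪ σ, ∏ i, b i (φ i) := by
  classical
  have term (g : ι → σ) :
      coeff (squarefreeExponent univ) ((∑ j, X j) ^ k * ∏ i, C (b i (g i)) * X (g i)) =
        if Function.Injective g then k.factorial * ∏ i, b i (g i) else 0 := by
    rw [prod_mul_distrib, ← map_prod, mul_left_comm, coeff_C_mul,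
      coeff_squarefreeExponent_mul_prod_X, coeff_squarefreeExponent_sum_X_pow]
    by_cases hg : Function.Injective g
    · have hcard : #(univ \ univ.image g) = k := by
        rw [card_univ_sdiff, card_image_of_injective _ hg, card_univ]
        omega
      simp [hg, hcard, mul_comm]
    · simp [hg]
  rw [prod_univ_sum, Fintype.piFinset_univ, mul_sum, coeff_sum, sum_congr rfl fun g _ ↦ term g,
    ← sum_filter, ← mul_sum, ← sum_subtype_eq_sum_filter, subtype_univ]
  congr 1
  exact Fintype.sum_equiv (Equiv.subtypeInjectiveEquivEmbedding ι σ) _ _ fun _ ↦ rfl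

end

open MvPolynomial in
theorem coeff_top_squarefree_monomial_general {R : Type*} [CommRing R] {t t' s : ℕ}
    (hs : s ≤ t) (a : Fin t → Fin t' → R) :
    MvPolynomial.coeff (Finsupp.equivFunOnFinite.symm fun _ : Fin t ⊕ Fin t' => 1)
      (((∑ u : Fin t, X (Sum.inl u) : MvPolynomial (Fin t ⊕ Fin t') R) ^ s *
          (∑ v : Fin t', X (Sum.inr v)) ^ (t - s)) *
        ∏ v : Fin t', ((∑ u : Fin t, C (a u v) * X (Sum.inl u)) + X (Sum.inr v))) =
      ((s.factorial : R) * ((t - s).factorial : R)) *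
        ∑ S ∈ Finset.univ.filter (fun S : Finset (Fin t') => S.card = t - s),
          ∑ φ : (↥S) ↪ Fin t, ∏ v : ↥S, a (φ v) ↑v := by
  classical
  have top : (Finsupp.equivFunOnFinite.symm fun _ : Fin t ⊕ Fin t' => 1) =
      (squarefreeExponent univ).sumElim (squarefreeExponent univ) := by
    ext (u | v) <;> simp [squarefreeExponent_apply]
  have expand :
      ((∑ u : Fin t, X (Sum.inl u) : MvPolynomial (Fin t ⊕ Fin t') R) ^ s *
          (∑ v : Fin t', X (Sum.inr v)) ^ (t - s)) *
        ∏ v : Fin t', ((∑ u : Fin t, C (a u v) * X (Sum.inl u)) + X (Sum.inr v)) =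
      ∑ S : Finset (Fin t'),
        rename Sum.inl ((∑ u, X u) ^ s * ∏ v : S, ∑ u, C (a u v) * X u) *
          rename Sum.inr ((∑ v, X v) ^ (t - s) * ∏ v ∈ univ \ S, X v) := by
    rw [prod_add, powerset_univ, mul_sum]
    refine sum_congr rfl fun S _ ↦ ?_
    rw [prod_coe_sort S fun v ↦ ∑ u, C (a u v) * X u]
    simp only [map_mul, map_pow, map_sum, map_prod, rename_X, rename_C]
    ring
  have coeff_rest (S : Finset (Fin t')) :
      coeff (squarefreeExponent univ)
        ((∑ v, X v : MvPolynomial (Fin t') R) ^ (t - s) * ∏ v ∈ univ \ S, X v) =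
      if #S = t - s then ((t - s).factorial : R) else 0 := by
    rw [coeff_squarefreeExponent_mul_prod_X, if_pos (by simp), image_id',
      sdiff_sdiff_right_self, inf_eq_inter, univ_inter, coeff_squarefreeExponent_sum_X_pow]
  rw [top, expand, coeff_sum]
  simp only [coeff_sumElim_rename_mul, coeff_rest, mul_ite, mul_zero]
  rw [← sum_filter, mul_sum]
  refine sum_congr rfl fun S hS ↦ ?_
  have hcard : Fintype.card S + s = Fintype.card (Fin t) := by
    rw [Fintype.card_coe, (mem_filter.mp hS).2, Fintype.card_fin]
    omega
  rw [coeff_squarefreeExponent_univ_sum_X_pow_mul_prod _ hcard]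
  ring

open MvPolynomial in
theorem coeff_top_squarefree_monomial {R : Type*} [CommRing R] {t t' s : ℕ}
    (hs : s ≤ t) (hts : t - s ≤ t') (a : Fin t → Fin t' → R) :
    MvPolynomial.coeff (Finsupp.equivFunOnFinite.symm fun _ : Fin t ⊕ Fin t' => 1)
      (((∑ u : Fin t, X (Sum.inl u) : MvPolynomial (Fin t ⊕ Fin t') R) ^ s *
          (∑ v : Fin t', X (Sum.inr v)) ^ (t - s)) *
        ∏ v : Fin t', ((∑ u : Fin t, C (a u v) * X (Sum.inl u)) + X (Sum.inr v))) =
      ((s.factorial : R) * ((t - s).factorial : R)) *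
        ∑ S ∈ Finset.univ.filter (fun S : Finset (Fin t') => S.card = t - s),
          ∑ φ : (↥S) ↪ Fin t, ∏ v : ↥S, a (φ v) ↑v :=
  coeff_top_squarefree_monomial_general hs a
end
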